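/- Over the max-plus semiring, if A is a definite n×n matrix over ℝ_max (per(A) = 0 and A_{i,i} = 0 for all i), then every diagonal entry of every compound matrix of A equals the unit: A^{∧k}_{I,I} = 0 for every k with 1 ≤ k ≤ n and every k-element subset I of {1,…,n}. -/

import Mathlib

open Matrix

noncomputable section

abbrev Rmax : Type := WithBot ℝ

def tropMul {l m p : Type*} [Fintype m] (A : Matrix l m Rmax) (B : Matrix m p Rmax) :
    Matrix l p Rmax :=
  Matrix.of fun i j => Finset.univ.sup fun t => A i t + B t j

def tropId (m : Type*) [DecidableEq m] : Matrix m m Rmax :=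
  Matrix.of fun i j => if i = j then (0 : Rmax) else ⊥

def tropPer {m : Type*} [Fintype m] [DecidableEq m] (A : Matrix m m Rmax) : Rmax :=
  Finset.univ.sup fun σ : Equiv.Perm m => ∑ i, A i (σ i)

def tropTrace {m : Type*} [Fintype m] (A : Matrix m m Rmax) : Rmax :=
  Finset.univ.sup fun i => A i i

abbrev KSub (n k : ℕ) : Type := {I : Finset (Fin n) // I.card = k}

def compound {n : ℕ} (k : ℕ) (A : Matrix (Fin n) (Fin n) Rmax) :
    Matrix (KSub n k) (KSub n k) Rmax :=
  Matrix.of fun I J =>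
    Finset.univ.sup fun σ : {x // x ∈ I.1} ≃ {x // x ∈ J.1} =>
      ∑ i : {x // x ∈ I.1}, A i.1 (σ i).1

def tropAdj {n : ℕ} (A : Matrix (Fin (n+1)) (Fin (n+1)) Rmax) :
    Matrix (Fin (n+1)) (Fin (n+1)) Rmax :=
  Matrix.of fun i j => tropPer (A.submatrix j.succAbove i.succAbove)

def tropQInv {n : ℕ} (A : Matrix (Fin (n+1)) (Fin (n+1)) Rmax) :
    Matrix (Fin (n+1)) (Fin (n+1)) Rmax :=
  Matrix.of fun i j => tropAdj A i j + ((- (WithBot.unbotD 0 (tropPer A)) : ℝ) : Rmax)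

def IsMonomial {n : ℕ} (A : Matrix (Fin n) (Fin n) Rmax) : Prop :=
  ∃ (π : Equiv.Perm (Fin n)) (d : Fin n → ℝ),
    ∀ i j, A i j = if j = π i then ((d i : ℝ) : Rmax) else ⊥

def tropPow {m : Type*} [Fintype m] [DecidableEq m] (A : Matrix m m Rmax) : ℕ → Matrix m m Rmax
  | 0 => tropId m
  | k + 1 => tropMul (tropPow A k) A

/-! A bijection `σ` of a `k`-subset `I` onto itself extends by the identity to a permutation of
`{1,…,n}`; since `A` has zero diagonal, its weight is that of `σ`, hence at most `per A = 0`.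
Conversely, the identity of `I` has weight `0`. -/

theorem sum_subtypeCongr_refl_eq {m R : Type*} [Fintype m] [DecidableEq m] [AddCommMonoid R]
    (A : Matrix m m R) (s : Finset m) (σ : Equiv.Perm s) :
    ∑ i, A i (σ.subtypeCongr (Equiv.refl {x // x ∉ s}) i) =
      ∑ i : s, A i (σ i) + ∑ i ∈ sᶜ, A i i := by
  rw [← Finset.sum_add_sum_compl s, ← Finset.sum_coe_sort s]
  congr 1
  · exact Finset.sum_congr rfl fun i _ => by
      rw [Equiv.Perm.subtypeCongr.left_apply _ _ i.2]
  · exact Finset.sum_congr rfl fun i hi => by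
      rw [Equiv.Perm.subtypeCongr.right_apply _ _ (Finset.mem_compl.mp hi), Equiv.refl_apply]

theorem sum_le_tropPer {m : Type*} [Fintype m] [DecidableEq m] (A : Matrix m m Rmax)
    (σ : Equiv.Perm m) : ∑ i, A i (σ i) ≤ tropPer A :=
  Finset.le_sup (f := fun σ : Equiv.Perm m => ∑ i, A i (σ i)) (Finset.mem_univ σ)

theorem compound_apply_self_le_tropPer {n k : ℕ} {A : Matrix (Fin n) (Fin n) Rmax}
    (hdiag : ∀ i, A i i = 0) (I : KSub n k) : compound k A I I ≤ tropPer A :=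
  Finset.sup_le fun σ _ => calc
    ∑ i : I.1, A i (σ i) = ∑ i : I.1, A i (σ i) + ∑ i ∈ I.1ᶜ, A i i := by simp [hdiag]
    _ = ∑ i, A i (σ.subtypeCongr (Equiv.refl {x // x ∉ I.1}) i) :=
      (sum_subtypeCongr_refl_eq A I.1 σ).symm
    _ ≤ tropPer A := sum_le_tropPer A _

theorem sum_diag_le_compound_apply_self {n k : ℕ} (A : Matrix (Fin n) (Fin n) Rmax)
    (I : KSub n k) : ∑ i ∈ I.1, A i i ≤ compound k A I I := by
  rw [← Finset.sum_coe_sort I.1]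
  exact Finset.le_sup (f := fun σ : I.1 ≃ I.1 => ∑ i : I.1, A i.1 (σ i).1)
    (Finset.mem_univ (Equiv.refl _))

theorem compound_diag_of_definite_general {n : ℕ} (A : Matrix (Fin n) (Fin n) Rmax)
    (hper : tropPer A = 0) (hdiag : ∀ i, A i i = 0)
    (k : ℕ) (I : KSub n k) :
    compound k A I I = 0 := by
  refine le_antisymm (hper ▸ compound_apply_self_le_tropPer hdiag I) ?_
  calc (0 : Rmax) = ∑ i ∈ I.1, A i i := by simp [hdiag]
    _ ≤ compound k A I I := sum_diag_le_compound_apply_self A I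

/-- for a definite matrix `A`, all diagonal entries of each compound
matrix equal the unit: `A^{∧k}_{I,I} = 0`. -/
theorem compound_diag_of_definite {n : ℕ} (A : Matrix (Fin n) (Fin n) Rmax)
    (hper : tropPer A = 0) (hdiag : ∀ i, A i i = 0)
    (k : ℕ) (hk1 : 1 ≤ k) (hk2 : k ≤ n) (I : KSub n k) :
    compound k A I I = 0 :=
  compound_diag_of_definite_general A hper hdiag k I
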